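/- Let α, β ∈ O_K be coprime (αO_K + βO_K = O_K) and fix γ₀, δ₀ ∈ O_K with αδ₀ − βγ₀ = 1. Let F be the set of all M ∈ SL₂(O_K) whose first column is (α, β)ᵀ. Then: (1) the set of curvatures {b(M) : M ∈ F} equals {i(βδ̄₀ − β̄δ₀) + k·√(−Δ)·N(β) : k ∈ ℤ}, i.e. it is a full congruence class modulo √(−Δ)·N(β); and (2) if β ≠ 0, there is a single real line in ℂ passing through α/β which contains the centres a(M)/b(M) of all M ∈ F with b(M) ≠ 0. -/

import Mathlib

open Complex ComplexConjugate NumberField OnePoint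

/-- The finite part of the Möbius image of the extended real line `ℝ̂` under the matrix
`[[α,γ],[β,δ]]`: the set `{(αx+γ)/(βx+δ) : x ∈ ℝ, βx+δ ≠ 0} ∪ {α/β if β ≠ 0}`. -/
def mobiusFin (α β γ δ : ℂ) : Set ℂ :=
  {z | (∃ x : ℝ, β * (x : ℂ) + δ ≠ 0 ∧ z = (α * x + γ) / (β * x + δ)) ∨ (β ≠ 0 ∧ z = α / β)}

/-- The Möbius image of `ℝ̂ = ℝ ∪ {∞}` in `ℂ ∪ {∞}` under the matrix `[[α,γ],[β,δ]]`;
`∞` belongs to it iff `β = 0` or `δ/β ∈ ℝ`. -/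
def mobius (α β γ δ : ℂ) : Set (OnePoint ℂ) :=
  {w | (∃ z ∈ mobiusFin α β γ δ, w = (z : OnePoint ℂ)) ∨
       ((β = 0 ∨ ∃ x : ℝ, δ = β * (x : ℂ)) ∧ w = ∞)}

/-- The extended real line `ℝ̂ = ℝ ∪ {∞}` as a subset of `ℂ ∪ {∞}`. -/
def rhat : Set (OnePoint ℂ) :=
  {w | (∃ x : ℝ, w = ((x : ℂ) : OnePoint ℂ)) ∨ w = ∞}

/-- The embedding of the ring of integers of `K` into `ℂ` induced by `ι : K →+* ℂ`. -/
noncomputable def emb (K : Type) [Field K] [NumberField K] (ι : K →+* ℂ)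
    (x : RingOfIntegers K) : ℂ := ι (algebraMap (RingOfIntegers K) K x)

/-- The `K`-Bianchi circle attached to `M ∈ SL₂(O_K)`: the Möbius image `M(ℝ̂) ⊆ ℂ ∪ {∞}`. -/
noncomputable def bianchiCircle (K : Type) [Field K] [NumberField K] (ι : K →+* ℂ)
    (M : Matrix.SpecialLinearGroup (Fin 2) (RingOfIntegers K)) : Set (OnePoint ℂ) :=
  mobius (emb K ι (M.1 0 0)) (emb K ι (M.1 1 0)) (emb K ι (M.1 0 1)) (emb K ι (M.1 1 1))
/-- The curvature `i(βδ̄−β̄δ)` of the oriented circle `M(ℝ̂)` for `M = [[α,γ],[β,δ]]`. -/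
noncomputable def curv (β δ : ℂ) : ℂ := Complex.I * (β * conj δ - conj β * δ)

/-- The curvature-centre `i(αδ̄−γβ̄)` of the oriented circle `M(ℝ̂)` for `M = [[α,γ],[β,δ]]`. -/
noncomputable def curvCenter (α β γ δ : ℂ) : ℂ := Complex.I * (α * conj δ - γ * conj β)

/-- The curvature of the `K`-Bianchi circle attached to `M ∈ SL₂(O_K)`. -/
noncomputable def curvM (K : Type) [Field K] [NumberField K] (ι : K →+* ℂ)
    (M : Matrix.SpecialLinearGroup (Fin 2) (RingOfIntegers K)) : ℂ :=
  curv (emb K ι (M.1 1 0)) (emb K ι (M.1 1 1))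

/-- The curvature-centre of the `K`-Bianchi circle attached to `M ∈ SL₂(O_K)`. -/
noncomputable def curvCenterM (K : Type) [Field K] [NumberField K] (ι : K →+* ℂ)
    (M : Matrix.SpecialLinearGroup (Fin 2) (RingOfIntegers K)) : ℂ :=
  curvCenter (emb K ι (M.1 0 0)) (emb K ι (M.1 1 0)) (emb K ι (M.1 0 1)) (emb K ι (M.1 1 1))

/-!
If `M, M₀ ∈ SL₂(O_K)` share the first column `(α, β)`, then `δ = δ₀ + β m` for some `m ∈ O_K`,
and the curvature becomes `b(M) = b(M₀) + N(β) · 2 Im m`. For imaginary quadratic `K` the values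
`2 Im m` fill out exactly `√(-Δ) ℤ`: for a basis `O_K = ℤ w₀ ⊕ ℤ w₁` one has
`Δ = -(2 Im (w̄₀ w₁))²`, and `Im (a w₀ + c w₁) = Im (w̄₀ w₁) (p c - q a)` where `1 = p w₀ + q w₁`
with `p, q` coprime, because `1` is primitive in `O_K`.

For the centres, `det M = 1` gives `a(M) β - b(M) α = i β̄` with `b(M)` real, so `a(M)/b(M)`
lies on the line through `α/β` with direction `i β̄ / β`.
-/

open Module

lemma curv_add_mul (β δ m : ℂ) :
    curv β (δ + β * m) = curv β δ + β * conj β * ((2 * m.im : ℝ) : ℂ) := by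
  have h : Complex.I * (conj m - m) = ((2 * m.im : ℝ) : ℂ) := by
    apply Complex.ext <;> simp; ring
  rw [← h]
  simp only [curv, map_add, map_mul]
  ring

lemma conj_curv (β δ : ℂ) : conj (curv β δ) = curv β δ := by
  simp only [curv, map_mul, map_sub, Complex.conj_I, Complex.conj_conj]
  ring

lemma curvCenter_div_curv {α β γ δ : ℂ} (hdet : α * δ - γ * β = 1) (hβ : β ≠ 0)
    (hb : curv β δ ≠ 0) :
    curvCenter α β γ δ / curv β δ
      = α / β + (((curv β δ).re⁻¹ : ℝ) : ℂ) * (Complex.I * conj β / β) := by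
  have hre : (((curv β δ).re⁻¹ : ℝ) : ℂ) = (curv β δ)⁻¹ := by
    rw [Complex.ofReal_inv, Complex.conj_eq_iff_re.mp (conj_curv β δ)]
  have hcentre : curvCenter α β γ δ * β - curv β δ * α = Complex.I * conj β := by
    simp only [curvCenter, curv]
    linear_combination (Complex.I * conj β) * hdet
  rw [hre]
  field_simp
  linear_combination hcentre

lemma sq_mul_conj_sub_conj_mul (z w : ℂ) :
    (z * conj w - conj z * w) ^ 2 = ((-(2 * (conj z * w).im) ^ 2 : ℝ) : ℂ) := by
  apply Complex.ext <;> simp [pow_two]; ring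

lemma im_intCast_mul_add_eq {w₀ w₁ : ℂ} {p q : ℤ} (h : (p : ℂ) * w₀ + q * w₁ = 1) (a c : ℤ) :
    ((a : ℂ) * w₀ + c * w₁).im = (conj w₀ * w₁).im * (p * c - q * a) := by
  have h' : ((p : ℂ) * conj w₀ + q * conj w₁) * (a * w₀ + c * w₁) = a * w₀ + c * w₁ := by
    simpa using congrArg (fun z => conj z * (a * w₀ + c * w₁)) h
  rw [← h']
  simp only [mul_im, add_re, mul_re, intCast_re, conj_re, intCast_im, conj_im, add_im]
  ring

lemma range_intCast_mul_abs (x : ℝ) :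
    Set.range (fun k : ℤ => (k : ℝ) * |x|) = Set.range (fun k : ℤ => (k : ℝ) * x) := by
  rcases abs_choice x with h | h
  · rw [h]
  · ext y
    constructor <;> rintro ⟨k, rfl⟩ <;> exact ⟨-k, by simp [h]⟩

lemma Module.Basis.isCoprime_repr_one {S : Type*} [CommRing S] [IsLocalHom (algebraMap ℤ S)]
    (b : Basis (Fin 2) ℤ S) : IsCoprime (b.repr 1 0) (b.repr 1 1) := by
  rw [← isRelPrime_iff_isCoprime]
  rintro d ⟨p, hp⟩ ⟨q, hq⟩
  have h : algebraMap ℤ S d * (p • b 0 + q • b 1) = 1 := by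
    conv_rhs => rw [← b.sum_repr 1, Fin.sum_univ_two, hp, hq]
    simp only [zsmul_eq_mul, Int.cast_mul, eq_intCast]
    ring
  exact isUnit_of_map_unit _ _ (IsUnit.of_mul_eq_one _ h)

lemma eq_add_mul_of_det_eq_one {R : Type*} [CommRing R] {α β γ δ γ₀ δ₀ : R}
    (h₀ : α * δ₀ - β * γ₀ = 1) (h : α * δ - γ * β = 1) :
    δ = δ₀ + β * (δ₀ * γ - γ₀ * δ) := by
  linear_combination δ₀ * h - δ * h₀

section

variable {K : Type} [Field K] [NumberField K]

lemma emb_eq (ι : K →+* ℂ) : emb K ι = ⇑(ι.comp (algebraMap (𝓞 K) K)) := rfl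

lemma emb_det_fin_two (ι : K →+* ℂ) (M : Matrix.SpecialLinearGroup (Fin 2) (𝓞 K)) :
    emb K ι (M.1 0 0) * emb K ι (M.1 1 1) - emb K ι (M.1 0 1) * emb K ι (M.1 1 0) = 1 := by
  calc _ = emb K ι (M.1 0 0 * M.1 1 1 - M.1 0 1 * M.1 1 0) := by simp [emb_eq]
    _ = 1 := by rw [← Matrix.det_fin_two, M.2, emb_eq, map_one]

lemma emb_ne_zero (ι : K →+* ℂ) {x : 𝓞 K} (hx : x ≠ 0) : emb K ι x ≠ 0 := by
  rw [emb_eq, RingHom.coe_comp, Function.comp_apply, map_ne_zero, map_ne_zero_iff _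
    RingOfIntegers.coe_injective]
  exact hx

lemma isTotallyComplex_of_finrank_eq_two_of_discr_neg (hdeg : finrank ℚ K = 2)
    (hdisc : discr K < 0) : IsTotallyComplex K := by
  have hsign := sign_discr K
  rw [Int.sign_eq_neg_one_of_neg hdisc] at hsign
  have hcomplex : InfinitePlace.nrComplexPlaces K ≠ 0 := by
    intro h
    rw [h, pow_zero] at hsign
    exact absurd hsign (by decide)
  have hrank := InfinitePlace.card_add_two_mul_card_eq_rank K
  rw [← nrRealPlaces_eq_zero_iff]
  omega

lemma bijective_ratAlgHom_conjugate {ι : K →+* ℂ} (hdeg : finrank ℚ K = 2)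
    (hι : ¬ ComplexEmbedding.IsReal ι) :
    Function.Bijective ![ι.toRatAlgHom, (ComplexEmbedding.conjugate ι).toRatAlgHom] := by
  refine (Fintype.bijective_iff_injective_and_card _).mpr ⟨?_, by simp [AlgHom.card, hdeg]⟩
  have hne : ι.toRatAlgHom ≠ (ComplexEmbedding.conjugate ι).toRatAlgHom := fun h =>
    hι (ComplexEmbedding.isReal_iff.mpr (RingHom.ext fun x => (DFunLike.congr_fun h x).symm))
  intro i j hij
  fin_cases i <;> fin_cases j <;> simp_all [eq_comm]

lemma discr_eq_neg_sq_im {ι : K →+* ℂ} (hdeg : finrank ℚ K = 2)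
    (hι : ¬ ComplexEmbedding.IsReal ι) (b : Basis (Fin 2) ℤ (𝓞 K)) :
    (discr K : ℝ) = -(2 * (conj (emb K ι (b 0)) * emb K ι (b 1)).im) ^ 2 := by
  let e : Fin 2 ≃ (K →ₐ[ℚ] ℂ) := Equiv.ofBijective _ (bijective_ratAlgHom_conjugate hdeg hι)
  have h : ((discr K : ℝ) : ℂ) = (emb K ι (b 0) * conj (emb K ι (b 1))
      - conj (emb K ι (b 0)) * emb K ι (b 1)) ^ 2 := by
    have h := Algebra.discr_eq_det_embeddingsMatrixReindex_pow_two ℚ ℂ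
      (b.localizationLocalization ℚ (nonZeroDivisors ℤ) K) e
    rw [Algebra.discr_localizationLocalization, discr_eq_discr, Matrix.det_fin_two] at h
    simpa [Algebra.embeddingsMatrixReindex, Algebra.embeddingsMatrix, e,
      Basis.localizationLocalization_apply, emb] using h
  rw [sq_mul_conj_sub_conj_mul] at h
  exact_mod_cast h

lemma range_two_mul_im_emb (ι : K →+* ℂ) (hdeg : finrank ℚ K = 2) (hdisc : discr K < 0) :
    Set.range (fun m : 𝓞 K => 2 * (emb K ι m).im)
      = Set.range (fun k : ℤ => (k : ℝ) * √(-(discr K : ℝ))) := by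
  have := isTotallyComplex_of_finrank_eq_two_of_discr_neg hdeg hdisc
  have hcard : Fintype.card (Free.ChooseBasisIndex ℤ (𝓞 K)) = 2 := by
    rw [← finrank_eq_card_chooseBasisIndex, RingOfIntegers.rank, hdeg]
  let b := (RingOfIntegers.basis K).reindex (Fintype.equivFinOfCardEq hcard)
  set w₀ := emb K ι (b 0)
  set w₁ := emb K ι (b 1)
  have hcomb (a c : ℤ) : emb K ι (a • b 0 + c • b 1) = a * w₀ + c * w₁ := by simp [w₀, w₁, emb_eq]
  have hrepr (m : 𝓞 K) : m = b.repr m 0 • b 0 + b.repr m 1 • b 1 := by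
    simpa [Fin.sum_univ_two] using (b.sum_repr m).symm
  have hone : (b.repr 1 0 : ℂ) * w₀ + b.repr 1 1 * w₁ = 1 := by
    rw [← hcomb, ← hrepr, emb_eq, map_one]
  have hsqrt : √(-(discr K : ℝ)) = |2 * (conj w₀ * w₁).im| := by
    rw [discr_eq_neg_sq_im hdeg (IsTotallyComplex.complexEmbedding_not_isReal ι) b, neg_neg,
      Real.sqrt_sq_eq_abs]
  obtain ⟨u, v, huv⟩ := b.isCoprime_repr_one
  rw [hsqrt, range_intCast_mul_abs]
  ext y
  constructor
  · rintro ⟨m, rfl⟩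
    refine ⟨b.repr 1 0 * b.repr m 1 - b.repr 1 1 * b.repr m 0, ?_⟩
    dsimp only
    conv_rhs => rw [hrepr m, hcomb, im_intCast_mul_add_eq hone]
    push_cast
    ring
  · rintro ⟨k, rfl⟩
    refine ⟨(-(k * v)) • b 0 + (k * u) • b 1, ?_⟩
    dsimp only
    rw [hcomb, im_intCast_mul_add_eq hone]
    have huv' : (u : ℝ) * b.repr 1 0 + v * b.repr 1 1 = 1 := by exact_mod_cast huv
    push_cast
    linear_combination (2 * (conj w₀ * w₁).im * k) * huv'

lemma setOf_curvM_eq (ι : K →+* ℂ) {α β γ₀ δ₀ : 𝓞 K} (hdet : α * δ₀ - β * γ₀ = 1) :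
    {z : ℂ | ∃ M : Matrix.SpecialLinearGroup (Fin 2) (𝓞 K),
        M.1 0 0 = α ∧ M.1 1 0 = β ∧ z = curvM K ι M}
      = {z : ℂ | ∃ m : 𝓞 K, z = curv (emb K ι β) (emb K ι δ₀)
          + ((2 * (emb K ι m).im : ℝ) : ℂ) * (emb K ι β * conj (emb K ι β))} := by
  have hcurv (m : 𝓞 K) : curv (emb K ι β) (emb K ι (δ₀ + β * m)) = curv (emb K ι β) (emb K ι δ₀)
      + ((2 * (emb K ι m).im : ℝ) : ℂ) * (emb K ι β * conj (emb K ι β)) := by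
    rw [show emb K ι (δ₀ + β * m) = emb K ι δ₀ + emb K ι β * emb K ι m by simp [emb_eq],
      curv_add_mul]
    ring
  ext z
  constructor
  · rintro ⟨M, rfl, rfl, rfl⟩
    have hdetM : M.1 0 0 * M.1 1 1 - M.1 0 1 * M.1 1 0 = 1 := by rw [← Matrix.det_fin_two, M.2]
    exact ⟨_, by rw [curvM, eq_add_mul_of_det_eq_one hdet hdetM, hcurv]⟩
  · rintro ⟨m, rfl⟩
    refine ⟨⟨!![α, γ₀ + α * m; β, δ₀ + β * m], ?_⟩, rfl, rfl, ?_⟩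
    · rw [Matrix.det_fin_two_of]
      linear_combination hdet
    · exact (hcurv m).symm

end

theorem stmt6_general (K : Type) [Field K] [NumberField K]
    (hdeg : Module.finrank ℚ K = 2) (hdisc : NumberField.discr K < 0)
    (ι : K →+* ℂ)
    (α β γ₀ δ₀ : RingOfIntegers K)
    (hdet : α * δ₀ - β * γ₀ = 1) :
    ({z : ℂ | ∃ M : Matrix.SpecialLinearGroup (Fin 2) (RingOfIntegers K),
        M.1 0 0 = α ∧ M.1 1 0 = β ∧ z = curvM K ι M}
      = {z : ℂ | ∃ k : ℤ,
          z = curv (emb K ι β) (emb K ι δ₀)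
            + (k : ℂ) * (Real.sqrt (-(NumberField.discr K : ℝ)) : ℂ)
              * (emb K ι β * conj (emb K ι β))})
    ∧ (β ≠ 0 → ∃ w v : ℂ, v ≠ 0 ∧
        (∃ t : ℝ, emb K ι α / emb K ι β = w + (t : ℂ) * v) ∧
        ∀ M : Matrix.SpecialLinearGroup (Fin 2) (RingOfIntegers K),
          M.1 0 0 = α → M.1 1 0 = β → curvM K ι M ≠ 0 →
            ∃ t : ℝ, curvCenterM K ι M / curvM K ι M = w + (t : ℂ) * v) := by
  constructor
  · rw [setOf_curvM_eq ι hdet]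
    have hrange := Set.ext_iff.mp (range_two_mul_im_emb ι hdeg hdisc)
    ext z
    constructor
    · rintro ⟨m, rfl⟩
      obtain ⟨k, hk⟩ := (hrange _).mp ⟨m, rfl⟩
      exact ⟨k, by beta_reduce at hk; rw [← hk]; push_cast; ring⟩
    · rintro ⟨k, rfl⟩
      obtain ⟨m, hm⟩ := (hrange _).mpr ⟨k, rfl⟩
      exact ⟨m, by beta_reduce at hm; rw [hm]; push_cast; ring⟩
  · intro hβ
    have hβ' := emb_ne_zero ι hβ
    refine ⟨emb K ι α / emb K ι β, Complex.I * conj (emb K ι β) / emb K ι β, by simp [hβ'],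
      ⟨0, by simp⟩, ?_⟩
    rintro M rfl rfl hb
    exact ⟨_, curvCenter_div_curv (emb_det_fin_two ι M) hβ' hb⟩

/-- Let `α, β ∈ O_K` be coprime and `αδ₀ − βγ₀ = 1`. Among all
`M ∈ SL₂(O_K)` with first column `(α,β)ᵀ`: (1) the set of curvatures is exactly the
congruence class `{i(βδ̄₀−β̄δ₀) + k√(−Δ)N(β) : k ∈ ℤ}` modulo `√(−Δ)N(β)`; and (2) if
`β ≠ 0`, a single real line through `α/β` contains the centres `a(M)/b(M)` of all such
circles with `b(M) ≠ 0`. -/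
theorem stmt6 (K : Type) [Field K] [NumberField K]
    (hdeg : Module.finrank ℚ K = 2) (hdisc : NumberField.discr K < 0)
    (ι : K →+* ℂ)
    (α β γ₀ δ₀ : RingOfIntegers K)
    (hcop : IsCoprime α β) (hdet : α * δ₀ - β * γ₀ = 1) :
    ({z : ℂ | ∃ M : Matrix.SpecialLinearGroup (Fin 2) (RingOfIntegers K),
        M.1 0 0 = α ∧ M.1 1 0 = β ∧ z = curvM K ι M}
      = {z : ℂ | ∃ k : ℤ,
          z = curv (emb K ι β) (emb K ι δ₀)
            + (k : ℂ) * (Real.sqrt (-(NumberField.discr K : ℝ)) : ℂ)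
              * (emb K ι β * conj (emb K ι β))})
    ∧ (β ≠ 0 → ∃ w v : ℂ, v ≠ 0 ∧
        (∃ t : ℝ, emb K ι α / emb K ι β = w + (t : ℂ) * v) ∧
        ∀ M : Matrix.SpecialLinearGroup (Fin 2) (RingOfIntegers K),
          M.1 0 0 = α → M.1 1 0 = β → curvM K ι M ≠ 0 →
            ∃ t : ℝ, curvCenterM K ι M / curvM K ι M = w + (t : ℂ) * v) :=
  stmt6_general K hdeg hdisc ι α β γ₀ δ₀ hdet
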